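/- arXiv:2603.27940 — 3 statements merged into one kernel-verified Lean document; each statement's English description precedes it below -/
import Mathlib

section
/- For probability measures μ, ν on ℝ with finite first moments, W₁(μ, ν) = ∫_ℝ |F_μ(x) − F_ν(x)| dx, where F_η(x) = η((−∞, x]) is the cumulative distribution function. -/
/-! For any coupling `π`, Tonelli gives `∫ |x - y| dπ = ∫ π({x ≤ t} ∆ {y ≤ t}) dt`, and the two
events have `π`-measures `F_μ(t)` and `F_ν(t)`, so the integrand is at least `|F_μ(t) - F_ν(t)|`.
The quantile coupling `(F_μ⁻¹(U), F_ν⁻¹(U))` makes the two events nested, so the bound is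
attained. Finite first moments make the cost of every coupling finite, so the real-valued
infimum defining `W1` is the `ℝ≥0∞`-valued one. -/

open MeasureTheory ProbabilityTheory Filter

noncomputable section

/-- The set of couplings of two measures on `ℝ`. -/
def Couplings (μ ν : Measure ℝ) : Set (Measure (ℝ × ℝ)) :=
  {π | π.map Prod.fst = μ ∧ π.map Prod.snd = ν}

/-- Wasserstein-1 distance, defined via couplings. -/
def W1 (μ ν : Measure ℝ) : ℝ :=
  sInf ((fun π : Measure (ℝ × ℝ) => ∫ p, |p.1 - p.2| ∂π) '' Couplings μ ν)

/-- The put function `P_η(x) = ∫ (x - t)⁺ η(dt)`. -/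
def put (η : Measure ℝ) (x : ℝ) : ℝ := ∫ t, max (x - t) 0 ∂η

/-- Cumulative distribution function of a measure on ℝ. -/
def cdfFn (η : Measure ℝ) (x : ℝ) : ℝ := (η (Set.Iic x)).toReal

open Set
open scoped symmDiff ENNReal

theorem Set.Iic_symmDiff_Iic {α : Type*} [LinearOrder α] (a b : α) :
    Iic a ∆ Iic b = Ioc (min a b) (max a b) := by
  rcases le_total a b with h | h
  · rw [symmDiff_of_le (Iic_subset_Iic.2 h), sdiff_eq, compl_Iic, Iic_inter_Ioi, min_eq_left h,
      max_eq_right h]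
  · rw [symmDiff_of_ge (Iic_subset_Iic.2 h), sdiff_eq, compl_Iic, Iic_inter_Ioi, min_eq_right h,
      max_eq_left h]

theorem Set.Ici_symmDiff_Ici {α : Type*} [LinearOrder α] (a b : α) :
    Ici a ∆ Ici b = Ico (min a b) (max a b) := by
  rcases le_total a b with h | h
  · rw [symmDiff_of_ge (Ici_subset_Ici.2 h), Ici_sdiff_Ici, min_eq_left h, max_eq_right h]
  · rw [symmDiff_of_le (Ici_subset_Ici.2 h), Ici_sdiff_Ici, min_eq_right h, max_eq_left h]

theorem ofReal_abs_sub_measureReal_le_measure_symmDiff {α : Type*} [MeasurableSpace α]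
    (μ : Measure α) [IsFiniteMeasure μ] (s t : Set α) :
    ENNReal.ofReal |μ.real s - μ.real t| ≤ μ (s ∆ t) := by
  have key : ∀ s t : Set α, μ.real s ≤ μ.real t + μ.real (s ∆ t) := fun s t =>
    (measureReal_mono fun x hx => by by_cases x ∈ t <;> simp [mem_symmDiff, *]).trans
      (measureReal_union_le t (s ∆ t))
  have h₁ := key s t
  have h₂ := key t s
  rw [symmDiff_comm] at h₂
  rw [ENNReal.ofReal_le_iff_le_toReal (measure_ne_top μ _), ← measureReal_def, abs_sub_le_iff]
  constructor <;> linarith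

theorem IsLeast.toReal_image {α : Type*} {s : Set α} {f : α → ℝ≥0∞} {a : ℝ≥0∞}
    (h : IsLeast (f '' s) a) (hf : ∀ x ∈ s, f x ≠ ⊤) :
    IsLeast ((fun x => (f x).toReal) '' s) a.toReal := by
  obtain ⟨⟨x, hx, rfl⟩, hlower⟩ := h
  refine ⟨⟨x, hx, rfl⟩, ?_⟩
  rintro _ ⟨y, hy, rfl⟩
  exact ENNReal.toReal_mono (hf y hy) (hlower ⟨y, hy, rfl⟩)

def transportCost (π : Measure (ℝ × ℝ)) : ℝ≥0∞ := ∫⁻ p, ENNReal.ofReal |p.1 - p.2| ∂π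

theorem transportCost_eq_lintegral_measure_symmDiff (π : Measure (ℝ × ℝ)) [SFinite π] :
    transportCost π = ∫⁻ t, π ((Prod.fst ⁻¹' Iic t) ∆ (Prod.snd ⁻¹' Iic t)) := by
  set S : Set (ℝ × (ℝ × ℝ)) := {q | q.2.1 ≤ q.1} ∆ {q | q.2.2 ≤ q.1}
  have hS : MeasurableSet S :=
    (measurableSet_le (by fun_prop) (by fun_prop)).symmDiff
      (measurableSet_le (by fun_prop) (by fun_prop))
  calc transportCost π = ∫⁻ p, volume ((fun t => (t, p)) ⁻¹' S) ∂π := by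
        refine lintegral_congr fun p => ?_
        change _ = volume (Ici p.1 ∆ Ici p.2)
        rw [Ici_symmDiff_Ici, Real.volume_Ico, max_sub_min_eq_abs, abs_sub_comm]
    _ = ∫⁻ t, π (Prod.mk t ⁻¹' S) := by
        rw [← Measure.prod_apply_symm hS, Measure.prod_apply hS]
    _ = ∫⁻ t, π ((Prod.fst ⁻¹' Iic t) ∆ (Prod.snd ⁻¹' Iic t)) := rfl

section Couplings

variable {μ ν : Measure ℝ} {π : Measure (ℝ × ℝ)}

theorem measure_fst_preimage_of_mem_couplings (hπ : π ∈ Couplings μ ν) {s : Set ℝ}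
    (hs : MeasurableSet s) : π (Prod.fst ⁻¹' s) = μ s := by
  rw [← hπ.1, Measure.map_apply measurable_fst hs]

theorem measure_snd_preimage_of_mem_couplings (hπ : π ∈ Couplings μ ν) {s : Set ℝ}
    (hs : MeasurableSet s) : π (Prod.snd ⁻¹' s) = ν s := by
  rw [← hπ.2, Measure.map_apply measurable_snd hs]

theorem isProbabilityMeasure_of_mem_couplings [IsProbabilityMeasure μ] (hπ : π ∈ Couplings μ ν) :
    IsProbabilityMeasure π :=
  ⟨by rw [← preimage_univ (f := Prod.fst),
    measure_fst_preimage_of_mem_couplings hπ MeasurableSet.univ, measure_univ]⟩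

theorem integrable_abs_sub_of_mem_couplings (hμ : Integrable (fun x : ℝ => x) μ)
    (hν : Integrable (fun x : ℝ => x) ν) (hπ : π ∈ Couplings μ ν) :
    Integrable (fun p : ℝ × ℝ => |p.1 - p.2|) π := by
  have h₁ : Integrable Prod.fst π :=
    (integrable_map_measure aestronglyMeasurable_id measurable_fst.aemeasurable).1 (hπ.1 ▸ hμ)
  have h₂ : Integrable Prod.snd π :=
    (integrable_map_measure aestronglyMeasurable_id measurable_snd.aemeasurable).1 (hπ.2 ▸ hν)
  exact (h₁.sub h₂).abs

theorem transportCost_ne_top_of_mem_couplings (hμ : Integrable (fun x : ℝ => x) μ)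
    (hν : Integrable (fun x : ℝ => x) ν) (hπ : π ∈ Couplings μ ν) : transportCost π ≠ ⊤ :=
  ((hasFiniteIntegral_iff_ofReal (ae_of_all _ fun _ => abs_nonneg _)).1
    (integrable_abs_sub_of_mem_couplings hμ hν hπ).2).ne

theorem lintegral_abs_sub_cdf_le_transportCost [IsProbabilityMeasure μ] [IsProbabilityMeasure ν]
    (hπ : π ∈ Couplings μ ν) :
    ∫⁻ t, ENNReal.ofReal |cdf μ t - cdf ν t| ≤ transportCost π := by
  have := isProbabilityMeasure_of_mem_couplings hπ
  rw [transportCost_eq_lintegral_measure_symmDiff]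
  refine lintegral_mono fun t => ?_
  convert ofReal_abs_sub_measureReal_le_measure_symmDiff π _ _ using 4 <;>
    simp only [cdf_eq_real, measureReal_def]
  · rw [measure_fst_preimage_of_mem_couplings hπ measurableSet_Iic]
  · rw [measure_snd_preimage_of_mem_couplings hπ measurableSet_Iic]

end Couplings

/-- Only meaningful for `u ∈ (0, 1)`: elsewhere the set is empty or unbounded below and `sInf`
returns the junk value `0`. -/
def quantile (η : Measure ℝ) (u : ℝ) : ℝ := sInf {x | u ≤ cdf η x}

section Quantile

variable (η : Measure ℝ) {u : ℝ}

theorem nonempty_le_cdf (hu : u < 1) : {x | u ≤ cdf η x}.Nonempty :=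
  (((tendsto_cdf_atTop η).eventually_const_lt hu).exists).imp fun _ hx => hx.le

theorem bddBelow_le_cdf (hu : 0 < u) : BddBelow {x | u ≤ cdf η x} := by
  obtain ⟨x₀, hx₀⟩ := ((tendsto_cdf_atBot η).eventually_lt_const hu).exists
  exact ⟨x₀, fun y hy => le_of_lt <| (monotone_cdf η).reflect_lt (hx₀.trans_le hy)⟩

theorem le_cdf_quantile (hu : u ∈ Ioo 0 1) : u ≤ cdf η (quantile η u) := by
  have hright : ∀ x ∈ Ioi (quantile η u), u ≤ cdf η x := fun x hx => by
    obtain ⟨y, hy, hyx⟩ := exists_lt_of_csInf_lt (nonempty_le_cdf η hu.2) hx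
    exact hy.trans (monotone_cdf η hyx.le)
  exact ge_of_tendsto (((cdf η).right_continuous _).mono Ioi_subset_Ici_self).tendsto
    (eventually_nhdsWithin_of_forall hright)

theorem quantile_le_iff (hu : u ∈ Ioo 0 1) {x : ℝ} : quantile η u ≤ x ↔ u ≤ cdf η x :=
  ⟨fun h => (le_cdf_quantile η hu).trans (monotone_cdf η h),
    fun h => csInf_le (bddBelow_le_cdf η hu.1) h⟩

theorem monotoneOn_quantile : MonotoneOn (quantile η) (Ioo 0 1) := fun _ hu _ hv huv =>
  (quantile_le_iff η hu).2 (huv.trans (le_cdf_quantile η hv))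

theorem preimage_quantile_Iic_inter_Ioo (x : ℝ) :
    quantile η ⁻¹' Iic x ∩ Ioo 0 1 = Iic (cdf η x) ∩ Ioo 0 1 := by
  ext u
  exact and_congr_left fun hu => quantile_le_iff η hu

end Quantile

theorem volume_Iic_inter_Ioo_zero_one {a : ℝ} (ha : a ≤ 1) :
    volume (Iic a ∩ Ioo 0 1) = ENNReal.ofReal a := by
  rw [measure_congr ((ae_eq_refl (Iic a)).inter Ioo_ae_eq_Ioc), Iic_inter_Ioc_of_le ha,
    Real.volume_Ioc, sub_zero]

theorem volume_Ioc_inter_Ioo_zero_one {a b : ℝ} (ha : 0 ≤ a) (hb : b ≤ 1) :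
    volume (Ioc a b ∩ Ioo 0 1) = ENNReal.ofReal (b - a) := by
  rw [measure_congr ((ae_eq_refl (Ioc a b)).inter Ioo_ae_eq_Ioc), Ioc_inter_Ioc,
    max_eq_left ha, min_eq_left hb, Real.volume_Ioc]

theorem aemeasurable_quantile (η : Measure ℝ) :
    AEMeasurable (quantile η) (volume.restrict (Ioo 0 1)) :=
  aemeasurable_restrict_of_monotoneOn measurableSet_Ioo (monotoneOn_quantile η)

theorem map_quantile (η : Measure ℝ) [IsProbabilityMeasure η] :
    (volume.restrict (Ioo 0 1)).map (quantile η) = η := by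
  refine Measure.ext_of_Iic _ _ fun x => ?_
  rw [Measure.map_apply_of_aemeasurable (aemeasurable_quantile η) measurableSet_Iic,
    Measure.restrict_apply' measurableSet_Ioo, preimage_quantile_Iic_inter_Ioo,
    volume_Iic_inter_Ioo_zero_one (cdf_le_one η x), ofReal_cdf]

/-- The comonotone coupling `(F_μ⁻¹ U, F_ν⁻¹ U)`, `U` uniform on `(0, 1)`. -/
def quantileCoupling (μ ν : Measure ℝ) : Measure (ℝ × ℝ) :=
  (volume.restrict (Ioo 0 1)).map fun u => (quantile μ u, quantile ν u)

theorem aemeasurable_quantile_prod (μ ν : Measure ℝ) :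
    AEMeasurable (fun u => (quantile μ u, quantile ν u)) (volume.restrict (Ioo 0 1)) :=
  (aemeasurable_quantile μ).prodMk (aemeasurable_quantile ν)

theorem quantileCoupling_symmDiff_preimage_Iic (μ ν : Measure ℝ) (t : ℝ) :
    quantileCoupling μ ν ((Prod.fst ⁻¹' Iic t) ∆ (Prod.snd ⁻¹' Iic t))
      = ENNReal.ofReal |cdf μ t - cdf ν t| := by
  have hs : MeasurableSet ((Prod.fst ⁻¹' Iic t) ∆ (Prod.snd ⁻¹' Iic t) : Set (ℝ × ℝ)) :=
    (measurable_fst measurableSet_Iic).symmDiff (measurable_snd measurableSet_Iic)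
  rw [quantileCoupling, Measure.map_apply_of_aemeasurable (aemeasurable_quantile_prod μ ν) hs,
    Measure.restrict_apply' measurableSet_Ioo, preimage_symmDiff, inter_symmDiff_distrib_right]
  change volume ((quantile μ ⁻¹' Iic t ∩ _) ∆ (quantile ν ⁻¹' Iic t ∩ _)) = _
  rw [preimage_quantile_Iic_inter_Ioo, preimage_quantile_Iic_inter_Ioo,
    ← inter_symmDiff_distrib_right, Iic_symmDiff_Iic,
    volume_Ioc_inter_Ioo_zero_one (le_min (cdf_nonneg μ t) (cdf_nonneg ν t))
      (max_le (cdf_le_one μ t) (cdf_le_one ν t)), max_sub_min_eq_abs, abs_sub_comm]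

theorem transportCost_quantileCoupling (μ ν : Measure ℝ) :
    transportCost (quantileCoupling μ ν) = ∫⁻ t, ENNReal.ofReal |cdf μ t - cdf ν t| := by
  have : SFinite (quantileCoupling μ ν) := by unfold quantileCoupling; infer_instance
  rw [transportCost_eq_lintegral_measure_symmDiff]
  exact lintegral_congr (quantileCoupling_symmDiff_preimage_Iic μ ν)

theorem quantileCoupling_mem_couplings (μ ν : Measure ℝ) [IsProbabilityMeasure μ]
    [IsProbabilityMeasure ν] : quantileCoupling μ ν ∈ Couplings μ ν := by
  constructor
  · rw [quantileCoupling, AEMeasurable.map_map_of_aemeasurable measurable_fst.aemeasurable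
      (aemeasurable_quantile_prod μ ν)]
    exact map_quantile μ
  · rw [quantileCoupling, AEMeasurable.map_map_of_aemeasurable measurable_snd.aemeasurable
      (aemeasurable_quantile_prod μ ν)]
    exact map_quantile ν

theorem isLeast_transportCost_image_couplings (μ ν : Measure ℝ) [IsProbabilityMeasure μ]
    [IsProbabilityMeasure ν] :
    IsLeast (transportCost '' Couplings μ ν) (∫⁻ t, ENNReal.ofReal |cdf μ t - cdf ν t|) :=
  ⟨⟨quantileCoupling μ ν, quantileCoupling_mem_couplings μ ν, transportCost_quantileCoupling μ ν⟩,
    by rintro _ ⟨π, hπ, rfl⟩; exact lintegral_abs_sub_cdf_le_transportCost hπ⟩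

theorem W1_eq_integral_cdf_diff (μ ν : Measure ℝ)
    [IsProbabilityMeasure μ] [IsProbabilityMeasure ν]
    (hμ : Integrable (fun x : ℝ => x) μ) (hν : Integrable (fun x : ℝ => x) ν) :
    W1 μ ν = ∫ x : ℝ, |cdfFn μ x - cdfFn ν x| := by
  have hcdf : ∀ (η : Measure ℝ) [IsProbabilityMeasure η], cdfFn η = cdf η :=
    fun η _ => funext fun x => (cdf_eq_real η x).symm
  have hcost : (fun π : Measure (ℝ × ℝ) => ∫ p, |p.1 - p.2| ∂π)
      = fun π => (transportCost π).toReal :=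
    funext fun π => integral_eq_lintegral_of_nonneg_ae (ae_of_all _ fun _ => abs_nonneg _)
      (by fun_prop)
  rw [W1, hcost, hcdf μ, hcdf ν,
    integral_eq_lintegral_of_nonneg_ae (f := fun x => |cdf μ x - cdf ν x|)
      (ae_of_all _ fun _ => abs_nonneg _)
      ((monotone_cdf μ).measurable.sub (monotone_cdf ν).measurable).abs.aestronglyMeasurable]
  exact ((isLeast_transportCost_image_couplings μ ν).toReal_image
    fun π hπ => transportCost_ne_top_of_mem_couplings hμ hν hπ).csInf_eq
end
end

section
/- For finite positive measures η, χ on ℝ with finite first moments and equal total mass, η is dominated by χ in the decreasing convex order (i.e., ∫ f dη ≤ ∫ f dχ for every convex nonincreasing f : ℝ → ℝ) if and only if P_η(x) ≤ P_χ(x) for all x ∈ ℝ. -/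
/-!
Every put payoff `y ↦ (s - y)⁺` is convex and nonincreasing, which gives one direction.
Conversely, a convex nonincreasing `f` is approximated on `[-(m + 1), m + 1]`, within `1 / (m + 1)`,
by its secant interpolation on a fine mesh, continued by the first secant to the left and by a
constant to the right. Such an interpolant is a constant plus a nonnegative combination of put
payoffs (the weights are the increments of the secant slopes, nonnegative by convexity), so its
integrals against `η` and `χ` are ordered once the masses agree and `P_η ≤ P_χ`. The approximants
are dominated by `|f| + |f 0| + 1`, and dominated convergence carries the inequality over to `f`.
-/

open MeasureTheory ProbabilityTheory Filter

noncomputable section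

/-- Decreasing convex order: integrals of convex nonincreasing functions are ordered. -/
def DecConvOrder (η χ : Measure ℝ) : Prop :=
  ∀ f : ℝ → ℝ, ConvexOn ℝ Set.univ f → Antitone f →
    Integrable f η → Integrable f χ → ∫ x, f x ∂η ≤ ∫ x, f x ∂χ

open Set Topology

section Secant

variable {f : ℝ → ℝ} {a b x : ℝ}

theorem ConvexOn.slope_le_slope (hf : ConvexOn ℝ univ f) {y z w : ℝ} (hxy : x < y)
    (hzw : z < w) (hxz : x ≤ z) (hyw : y ≤ w) : slope f x y ≤ slope f z w :=
  calc slope f x y ≤ slope f x w :=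
        hf.slope_mono (mem_univ x) ⟨trivial, hxy.ne'⟩ ⟨trivial, (hxy.trans_le hyw).ne'⟩ hyw
    _ = slope f w x := slope_comm _ _ _
    _ ≤ slope f w z :=
        hf.slope_mono (mem_univ w) ⟨trivial, (hxy.trans_le hyw).ne⟩ ⟨trivial, hzw.ne⟩ hxz
    _ = slope f z w := slope_comm _ _ _

theorem apply_eq_add_slope_mul (f : ℝ → ℝ) (a x : ℝ) : f x = f a + slope f a x * (x - a) := by
  have := sub_smul_slope_vadd f a x
  rw [smul_eq_mul, vadd_eq_add] at this
  linarith

theorem ConvexOn.le_secant (hf : ConvexOn ℝ univ f) (hax : a ≤ x) (hxb : x ≤ b) :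
    f x ≤ f a + slope f a b * (x - a) := by
  rcases hax.eq_or_lt with rfl | hax
  · simp
  have := hf.slope_mono (mem_univ a) ⟨trivial, hax.ne'⟩ ⟨trivial, (hax.trans_le hxb).ne'⟩ hxb
  rw [apply_eq_add_slope_mul f a x]
  gcongr

theorem ConvexOn.secant_le_of_le (hf : ConvexOn ℝ univ f) (hab : a < b) (hxa : x ≤ a) :
    f a + slope f a b * (x - a) ≤ f x := by
  rcases hxa.eq_or_lt with rfl | hxa
  · simp
  have := hf.slope_mono (mem_univ a) ⟨trivial, hxa.ne⟩ ⟨trivial, hab.ne'⟩ (hxa.trans hab).le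
  rw [apply_eq_add_slope_mul f a x, add_le_add_iff_left]
  exact mul_le_mul_of_nonpos_right this (by linarith)

end Secant

section SecantInterpolant

variable (f : ℝ → ℝ) (t : ℕ → ℝ) (N : ℕ)

def secantSlope (i : ℕ) : ℝ := if i < N then slope f (t i) (t (i + 1)) else 0

/-- The piecewise linear interpolation of `f` at the nodes `t 0, …, t N`, continued by the first
secant to the left and by a constant to the right, written (by Abel summation) as a combination of
put payoffs. -/
def secantInterpolant (x : ℝ) : ℝ :=
  f (t N) + ∑ i ∈ Finset.range N,
    (secantSlope f t N (i + 1) - secantSlope f t N i) * max (t (i + 1) - x) 0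

variable {f t N}

theorem secantInterpolant_eq (ht : Monotone t) {k : ℕ} {x : ℝ} (hk : k < N)
    (hlo : ∀ i < k, t (i + 1) ≤ x) (hhi : x ≤ t (k + 1)) :
    secantInterpolant f t N x = f (t k) + secantSlope f t N k * (x - t k) := by
  set σ := secantSlope f t N
  set Φ : ℕ → ℝ := fun i => σ i * (t i - x) - f (t i)
  have hvanish : ∀ i ∈ Finset.range k, (σ (i + 1) - σ i) * max (t (i + 1) - x) 0 = 0 :=
    fun i hi => by rw [max_eq_right (sub_nonpos.2 (hlo i (Finset.mem_range.1 hi))), mul_zero]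
  have htelescope : ∀ i ∈ Finset.Ico k N,
      (σ (i + 1) - σ i) * max (t (i + 1) - x) 0 = Φ (i + 1) - Φ i := by
    intro i hi
    obtain ⟨hki, hiN⟩ := Finset.mem_Ico.1 hi
    have hx : x ≤ t (i + 1) := hhi.trans (ht (by omega))
    have hchord : σ i * (t (i + 1) - t i) = f (t (i + 1)) - f (t i) := by
      rw [apply_eq_add_slope_mul f (t i) (t (i + 1))]
      simp only [σ, secantSlope, if_pos hiN]
      ring
    rw [max_eq_left (sub_nonneg.2 hx)]
    linear_combination -hchord
  have hΦN : Φ N = -f (t N) := by simp [Φ, σ, secantSlope]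
  rw [secantInterpolant, ← Finset.sum_range_add_sum_Ico _ hk.le, Finset.sum_eq_zero hvanish,
    Finset.sum_congr rfl htelescope, Finset.sum_Ico_sub Φ hk.le, hΦN]
  ring

theorem secantInterpolant_of_le (ht : Monotone t) {x : ℝ} (hx : t N ≤ x) :
    secantInterpolant f t N x = f (t N) := by
  refine add_eq_left.2 (Finset.sum_eq_zero fun i hi => ?_)
  have : t (i + 1) ≤ x := (ht (Finset.mem_range.1 hi)).trans hx
  rw [max_eq_right (sub_nonpos.2 this), mul_zero]

theorem secantSlope_nonpos (hf : Antitone f) (i : ℕ) : secantSlope f t N i ≤ 0 := by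
  unfold secantSlope
  split_ifs
  exacts [(hf.antitoneOn univ).slope_nonpos trivial trivial, le_rfl]

theorem secantSlope_monotone (hf : ConvexOn ℝ univ f) (hf' : Antitone f) (ht : StrictMono t) :
    Monotone (secantSlope f t N) := by
  refine monotone_nat_of_le_succ fun i => ?_
  by_cases hi : i + 1 < N
  · rw [secantSlope, secantSlope, if_pos (by omega), if_pos hi]
    exact hf.slope_le_slope (ht i.lt_succ_self) (ht (i + 1).lt_succ_self) (ht.monotone (by omega))
      (ht.monotone (by omega))
  · have hlast : secantSlope f t N (i + 1) = 0 := if_neg hi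
    exact hlast ▸ secantSlope_nonpos hf' i

theorem secantInterpolant_mem_Icc_of_le (hf : ConvexOn ℝ univ f) (hf' : Antitone f)
    (ht : StrictMono t) (hN : 0 < N) {x : ℝ} (hx : x ≤ t 0) :
    secantInterpolant f t N x ∈ Icc (f (t 0)) (f x) := by
  rw [secantInterpolant_eq ht.monotone hN (by simp) (hx.trans (ht.monotone (Nat.zero_le 1))),
    secantSlope, if_pos hN]
  exact ⟨le_add_of_nonneg_right (mul_nonneg_of_nonpos_of_nonpos
    ((hf'.antitoneOn univ).slope_nonpos trivial trivial) (sub_nonpos.2 hx)),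
    hf.secant_le_of_le (ht Nat.zero_lt_one) hx⟩

theorem secantInterpolant_mem_Icc_of_mem_Icc (hf : ConvexOn ℝ univ f) (hf' : Antitone f)
    (ht : Monotone t) {k : ℕ} (hk : k < N) {x : ℝ} (hx : x ∈ Icc (t k) (t (k + 1))) :
    secantInterpolant f t N x ∈ Icc (f x) (f (t k)) := by
  rw [secantInterpolant_eq ht hk (fun i hi => (ht hi).trans hx.1) hx.2, secantSlope, if_pos hk]
  exact ⟨hf.le_secant hx.1 hx.2, add_le_of_nonpos_right (mul_nonpos_of_nonpos_of_nonneg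
    ((hf'.antitoneOn univ).slope_nonpos trivial trivial) (sub_nonneg.2 hx.1))⟩

theorem exists_cell {x : ℝ} (h0 : t 0 ≤ x) (hN : x < t N) :
    ∃ k < N, t k ≤ x ∧ x < t (k + 1) := by
  induction N with
  | zero => exact absurd h0 (not_le.2 hN)
  | succ n ih =>
    by_cases hn : x < t n
    · obtain ⟨k, hk, hkx⟩ := ih hn
      exact ⟨k, by omega, hkx⟩
    · exact ⟨n, n.lt_succ_self, not_lt.1 hn, hN⟩

end SecantInterpolant

def IsPutCombination (g : ℝ → ℝ) : Prop :=
  ∃ (c : ℝ) (n : ℕ) (w s : ℕ → ℝ), (∀ i, 0 ≤ w i) ∧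
    g = fun x => c + ∑ i ∈ Finset.range n, w i * max (s i - x) 0

theorem isPutCombination_secantInterpolant {f : ℝ → ℝ} {t : ℕ → ℝ} (N : ℕ)
    (hf : ConvexOn ℝ univ f) (hf' : Antitone f) (ht : StrictMono t) :
    IsPutCombination (secantInterpolant f t N) :=
  ⟨f (t N), N, fun i => secantSlope f t N (i + 1) - secantSlope f t N i, fun i => t (i + 1),
    fun i => sub_nonneg.2 (secantSlope_monotone hf hf' ht i.le_succ), rfl⟩

theorem IsPutCombination.continuous {g : ℝ → ℝ} (hg : IsPutCombination g) : Continuous g := by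
  obtain ⟨c, n, w, s, -, rfl⟩ := hg
  fun_prop

section Integrals

variable {η χ : Measure ℝ} [IsFiniteMeasure η] [IsFiniteMeasure χ]

theorem integrable_max_sub_zero (hη : Integrable (fun x : ℝ => x) η) (s : ℝ) :
    Integrable (fun x => max (s - x) 0) η :=
  ((integrable_const s).sub hη).pos_part

theorem integral_putCombination (hη : Integrable (fun x : ℝ => x) η) (c : ℝ) (n : ℕ)
    (w s : ℕ → ℝ) :
    ∫ x, c + ∑ i ∈ Finset.range n, w i * max (s i - x) 0 ∂η
      = η.real univ * c + ∑ i ∈ Finset.range n, w i * put η (s i) := by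
  have hint : ∀ i ∈ Finset.range n, Integrable (fun x => w i * max (s i - x) 0) η :=
    fun i _ => (integrable_max_sub_zero hη (s i)).const_mul (w i)
  rw [integral_add (integrable_const c) (integrable_finsetSum _ hint), integral_const,
    smul_eq_mul, integral_finsetSum _ hint]
  simp only [integral_const_mul, put]

theorem IsPutCombination.integral_le {g : ℝ → ℝ} (hg : IsPutCombination g)
    (hη : Integrable (fun x : ℝ => x) η) (hχ : Integrable (fun x : ℝ => x) χ)
    (hmass : η univ = χ univ) (hput : ∀ x, put η x ≤ put χ x) :
    ∫ x, g x ∂η ≤ ∫ x, g x ∂χ := by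
  obtain ⟨c, n, w, s, hw, rfl⟩ := hg
  rw [integral_putCombination hη, integral_putCombination hχ, Measure.real, Measure.real, hmass]
  gcongr with i
  exacts [hw i, hput (s i)]

end Integrals

section Approximation

variable {f : ℝ → ℝ}

theorem exists_isPutCombination_approx (hf : ConvexOn ℝ univ f) (hf' : Antitone f) {a b ε : ℝ}
    (hab : a < b) (hε : 0 < ε) :
    ∃ g, IsPutCombination g ∧ (∀ x ≤ a, f a ≤ g x ∧ g x ≤ f x) ∧
      (∀ x ∈ Ico a b, f x ≤ g x ∧ g x ≤ f x + ε) ∧ ∀ x, b ≤ x → g x = f b := by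
  -- On `[a, ∞)` all secant slopes are at least that of `f` over `[a - 1, a]`, so a mesh `δ`
  -- with `δ * K ≤ ε` keeps the interpolation error below `ε`.
  set K := -slope f (a - 1) a
  obtain ⟨N, hN⟩ := exists_nat_gt ((b - a) * K / ε)
  have hK : 0 ≤ K := neg_nonneg.2 ((hf'.antitoneOn univ).slope_nonpos trivial trivial)
  have hNpos : (0 : ℝ) < N := lt_of_le_of_lt (by positivity) hN
  set δ := (b - a) / N
  have hδK : δ * K ≤ ε := by
    rw [div_lt_iff₀ hε] at hN
    rw [div_mul_eq_mul_div, div_le_iff₀ hNpos]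
    linarith
  set t : ℕ → ℝ := fun i => a + i * δ
  have ht : StrictMono t := fun i j hij => by
    have : 0 < δ := div_pos (by linarith) hNpos
    simp only [t]
    gcongr
  have ht0 : t 0 = a := by simp [t]
  have htN : t N = b := by simp only [t, δ]; field_simp; ring
  refine ⟨secantInterpolant f t N, isPutCombination_secantInterpolant N hf hf' ht,
    fun x hx => ?_, fun x hx => ?_, fun x hx => ?_⟩
  · exact ht0 ▸ secantInterpolant_mem_Icc_of_le hf hf' ht (by exact_mod_cast hNpos) (ht0 ▸ hx)
  · obtain ⟨k, hk, hkx, hxk⟩ := exists_cell (t := t) (ht0 ▸ hx.1) (htN ▸ hx.2)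
    obtain ⟨hlow, hhigh⟩ := secantInterpolant_mem_Icc_of_mem_Icc hf hf' ht.monotone hk ⟨hkx, hxk.le⟩
    have hdrop : f (t k) - f (t (k + 1)) ≤ δ * K := by
      have hslope : slope f (a - 1) a ≤ slope f (t k) (t (k + 1)) :=
        hf.slope_le_slope (by linarith) (ht k.lt_succ_self)
          (by linarith [ht0 ▸ ht.monotone k.zero_le]) (ht0 ▸ ht.monotone (Nat.zero_le (k + 1)))
      have hcell : t (k + 1) - t k = δ := by simp only [t]; push_cast; ring
      have hchord := apply_eq_add_slope_mul f (t k) (t (k + 1))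
      rw [hcell] at hchord
      nlinarith
    exact ⟨hlow, by linarith [hf' hxk.le]⟩
  · rw [secantInterpolant_of_le ht.monotone (htN ▸ hx), htN]

theorem exists_seq_isPutCombination_tendsto (hf : ConvexOn ℝ univ f) (hf' : Antitone f) :
    ∃ g : ℕ → ℝ → ℝ, (∀ m, IsPutCombination (g m)) ∧ (∀ m x, |g m x| ≤ |f x| + |f 0| + 1) ∧
      ∀ x, Tendsto (fun m => g m x) atTop (𝓝 (f x)) := by
  have hm : ∀ m : ℕ, (0 : ℝ) < m + 1 := fun m => by positivity
  choose g hg hleft hmid hright using fun m : ℕ =>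
    exists_isPutCombination_approx hf hf' (a := -(m + 1)) (b := m + 1) (ε := 1 / (m + 1))
      (by linarith [hm m]) (by have := hm m; positivity)
  refine ⟨g, hg, fun m x => abs_le.2 ?_, fun x => ?_⟩
  · have h0a : f 0 ≤ f (-(m + 1)) := hf' (by linarith [hm m])
    have hb0 : f (m + 1) ≤ f 0 := hf' (hm m).le
    have hε : 1 / ((m : ℝ) + 1) ≤ 1 := (div_le_one (hm m)).2 (by simp)
    have := neg_abs_le (f x); have := le_abs_self (f x)
    have := neg_abs_le (f 0); have := le_abs_self (f 0)
    rcases le_or_gt x (-(m + 1)) with hx | hx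
    · have := hleft m x hx; constructor <;> linarith
    rcases lt_or_ge x (m + 1) with hx' | hx'
    · have := hmid m x ⟨hx.le, hx'⟩; constructor <;> linarith
    · have := hright m x hx'; have := hf' hx'; constructor <;> linarith
  · have hev : ∀ᶠ m : ℕ in atTop, x ∈ Ico (-((m : ℝ) + 1)) (m + 1) := by
      filter_upwards [eventually_ge_atTop ⌈|x|⌉₊] with m hm
      have : |x| < m + 1 := (Nat.le_ceil _).trans_lt (by exact_mod_cast Nat.lt_succ_of_le hm)
      exact ⟨by linarith [neg_abs_le x], by linarith [le_abs_self x]⟩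
    have hupper : Tendsto (fun m : ℕ => f x + 1 / ((m : ℝ) + 1)) atTop (𝓝 (f x)) := by
      simpa using tendsto_const_nhds.add (tendsto_one_div_add_atTop_nhds_zero_nat (𝕜 := ℝ))
    exact tendsto_of_tendsto_of_tendsto_of_le_of_le' tendsto_const_nhds hupper
      (hev.mono fun m hx => (hmid m x hx).1) (hev.mono fun m hx => (hmid m x hx).2)

theorem integral_le_integral_of_put_le {η χ : Measure ℝ} [IsFiniteMeasure η] [IsFiniteMeasure χ]
    (hf : ConvexOn ℝ univ f) (hf' : Antitone f) (hfη : Integrable f η) (hfχ : Integrable f χ)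
    (hη : Integrable (fun x : ℝ => x) η) (hχ : Integrable (fun x : ℝ => x) χ)
    (hmass : η univ = χ univ) (hput : ∀ x, put η x ≤ put χ x) :
    ∫ x, f x ∂η ≤ ∫ x, f x ∂χ := by
  obtain ⟨g, hg, hbound, hlim⟩ := exists_seq_isPutCombination_tendsto hf hf'
  have hconv : ∀ (μ : Measure ℝ) [IsFiniteMeasure μ], Integrable f μ →
      Tendsto (fun m => ∫ x, g m x ∂μ) atTop (𝓝 (∫ x, f x ∂μ)) := fun μ _ hfμ =>
    tendsto_integral_of_dominated_convergence (fun x => |f x| + |f 0| + 1)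
      (fun m => (hg m).continuous.aestronglyMeasurable)
      ((hfμ.abs.add (integrable_const _)).add (integrable_const _))
      (fun m => ae_of_all _ (hbound m)) (ae_of_all _ hlim)
  exact le_of_tendsto_of_tendsto' (hconv η hfη) (hconv χ hfχ)
    fun m => (hg m).integral_le hη hχ hmass hput

end Approximation

theorem decConvOrder_iff_put_le (η χ : Measure ℝ)
    [IsFiniteMeasure η] [IsFiniteMeasure χ]
    (hη : Integrable (fun x : ℝ => x) η) (hχ : Integrable (fun x : ℝ => x) χ)
    (hmass : η Set.univ = χ Set.univ) :
    DecConvOrder η χ ↔ ∀ x : ℝ, put η x ≤ put χ x := by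
  refine ⟨fun h x => ?_, fun hput f hf hf' hfη hfχ =>
    integral_le_integral_of_put_le hf hf' hfη hfχ hη hχ hmass hput⟩
  have hconv : ConvexOn ℝ univ fun t : ℝ => max (x - t) 0 :=
    ((convexOn_const x convex_univ).sub (concaveOn_id convex_univ)).sup
      (convexOn_const 0 convex_univ)
  have hanti : Antitone fun t : ℝ => max (x - t) 0 := fun _ _ hst => by
    dsimp only
    gcongr
  exact h _ hconv hanti (integrable_max_sub_zero hη x) (integrable_max_sub_zero hχ x)
end
end

section
/- Let π = μ(dx) π_x(dy) be a supermartingale coupling between probability measures μ, ν on ℝ with finite first moments, and let α ∈ (0,1). Define π_x^α as the push-forward of π_x under y ↦ αy + (1−α)x, and π^α := μ(dx) π_x^α(dy). Then π^α is a supermartingale coupling between μ and its second marginal ν^α, and AW₁(π^α, π) ≤ (1−α)(∫ |x| μ(dx) + ∫ |y| ν(dy)). -/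
open MeasureTheory ProbabilityTheory Filter

noncomputable section

/-- Adapted Wasserstein-1 distance between two couplings given by their first
marginals and disintegration kernels. -/
def AW1 (μ : Measure ℝ) (κ : Kernel ℝ ℝ) (μ' : Measure ℝ) (κ' : Kernel ℝ ℝ) : ℝ :=
  sInf ((fun γ : Measure (ℝ × ℝ) =>
    ∫ p, (|p.1 - p.2| + W1 (κ p.1) (κ' p.2)) ∂γ) '' Couplings μ μ')

/-!
Under `κ' x` each point `y` of `κ x` is moved to `α y + (1 - α) x`, a displacement of
`(1 - α) |y - x|`. Coupling `μ` with itself along the diagonal and `κ' x` with `κ x` by this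
map therefore costs `(1 - α) ∫∫ |y - x| κ x (dy) μ (dx)`, and `|y - x| ≤ |x| + |y|` bounds
this by the first moments of `μ` and `ν`. The transport map is optimal: testing against the
1-Lipschitz function `|· - x|` gives the matching lower bound. The barycentre of `κ' x` is
`α m + (1 - α) x ≤ x` whenever the barycentre `m` of `κ x` is `≤ x`.
-/

lemma integral_id_map_affine {ρ : Measure ℝ} [IsProbabilityMeasure ρ]
    (hρ : Integrable (fun y => y) ρ) (a b : ℝ) :
    ∫ y, y ∂(ρ.map fun y => a * y + b) = a * ∫ y, y ∂ρ + b := by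
  rw [integral_map (f := fun y => y) (by fun_prop) aestronglyMeasurable_id,
    integral_add (hρ.const_mul a) (integrable_const b), integral_const_mul]
  simp

namespace Couplings

variable {μ ν : Measure ℝ} {γ : Measure (ℝ × ℝ)}

lemma integrable_comp_fst (hγ : γ ∈ Couplings μ ν) {f : ℝ → ℝ} (hf : Integrable f μ) :
    Integrable (fun p => f p.1) γ := by
  rw [← hγ.1] at hf
  exact hf.comp_measurable measurable_fst

lemma integrable_comp_snd (hγ : γ ∈ Couplings μ ν) {f : ℝ → ℝ} (hf : Integrable f ν) :
    Integrable (fun p => f p.2) γ := by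
  rw [← hγ.2] at hf
  exact hf.comp_measurable measurable_snd

lemma integral_comp_fst (hγ : γ ∈ Couplings μ ν) {f : ℝ → ℝ} (hf : Measurable f) :
    ∫ p, f p.1 ∂γ = ∫ x, f x ∂μ := by
  rw [← hγ.1, integral_map measurable_fst.aemeasurable hf.aestronglyMeasurable]

lemma integral_comp_snd (hγ : γ ∈ Couplings μ ν) {f : ℝ → ℝ} (hf : Measurable f) :
    ∫ p, f p.2 ∂γ = ∫ y, f y ∂ν := by
  rw [← hγ.2, integral_map measurable_snd.aemeasurable hf.aestronglyMeasurable]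

lemma prod_mem [IsProbabilityMeasure μ] [IsProbabilityMeasure ν] :
    μ.prod ν ∈ Couplings μ ν := by
  simp [Couplings]

lemma map_mem (ρ : Measure ℝ) {f g : ℝ → ℝ} (hf : Measurable f) (hg : Measurable g) :
    ρ.map (fun x => (f x, g x)) ∈ Couplings (ρ.map f) (ρ.map g) :=
  ⟨Measure.map_map measurable_fst (hf.prodMk hg), Measure.map_map measurable_snd (hf.prodMk hg)⟩

lemma map_diag_mem (μ : Measure ℝ) : μ.map Function.diag ∈ Couplings μ μ :=
  ⟨(Measure.map_map measurable_fst measurable_diag).trans Measure.map_id,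
    (Measure.map_map measurable_snd measurable_diag).trans Measure.map_id⟩

end Couplings

lemma W1_nonneg (μ ν : Measure ℝ) : 0 ≤ W1 μ ν :=
  Real.sInf_nonneg <| by rintro _ ⟨π, -, rfl⟩; positivity

lemma W1_le_integral_of_mem {μ ν : Measure ℝ} {γ : Measure (ℝ × ℝ)}
    (hγ : γ ∈ Couplings μ ν) :
    W1 μ ν ≤ ∫ p, |p.1 - p.2| ∂γ :=
  csInf_le ⟨0, by rintro _ ⟨π, -, rfl⟩; positivity⟩ ⟨γ, hγ, rfl⟩

lemma W1_map_le (ρ : Measure ℝ) {f : ℝ → ℝ} (hf : Measurable f) :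
    W1 (ρ.map f) ρ ≤ ∫ y, |f y - y| ∂ρ := by
  have hγ := Couplings.map_mem ρ hf measurable_id
  rw [Measure.map_id] at hγ
  calc W1 (ρ.map f) ρ ≤ _ := W1_le_integral_of_mem hγ
    _ = ∫ y, |f y - y| ∂ρ := integral_map (by fun_prop) (by fun_prop)

lemma LipschitzWith.integrable_of_integrable_id {μ : Measure ℝ} [IsFiniteMeasure μ]
    {φ : ℝ → ℝ} (hφ : LipschitzWith 1 φ) (hμ : Integrable (fun x => x) μ) :
    Integrable φ μ := by
  refine ((integrable_const |φ 0|).add hμ.abs).mono' hφ.continuous.aestronglyMeasurable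
    (.of_forall fun x => ?_)
  have := hφ.dist_le_mul x 0
  simp only [Real.dist_eq, NNReal.coe_one, one_mul, sub_zero, Real.norm_eq_abs,
    Pi.add_apply] at this ⊢
  linarith [abs_sub_abs_le_abs_sub (φ x) (φ 0)]

lemma integral_sub_integral_le_W1 {μ ν : Measure ℝ}
    [IsProbabilityMeasure μ] [IsProbabilityMeasure ν]
    (hμ : Integrable (fun x => x) μ) (hν : Integrable (fun x => x) ν) {φ : ℝ → ℝ}
    (hφ : LipschitzWith 1 φ) :
    ∫ y, φ y ∂ν - ∫ x, φ x ∂μ ≤ W1 μ ν := by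
  refine le_csInf ⟨_, μ.prod ν, Couplings.prod_mem, rfl⟩ ?_
  rintro _ ⟨γ, hγ, rfl⟩
  have hφm : Measurable φ := hφ.continuous.measurable
  have hφ₁ := Couplings.integrable_comp_fst hγ (hφ.integrable_of_integrable_id hμ)
  have hφ₂ := Couplings.integrable_comp_snd hγ (hφ.integrable_of_integrable_id hν)
  have hcost := (Couplings.integrable_comp_fst hγ hμ).sub (Couplings.integrable_comp_snd hγ hν)
  calc ∫ y, φ y ∂ν - ∫ x, φ x ∂μ = ∫ p, (φ p.2 - φ p.1) ∂γ := by
        rw [integral_sub hφ₂ hφ₁, Couplings.integral_comp_fst hγ hφm,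
          Couplings.integral_comp_snd hγ hφm]
    _ ≤ ∫ p, |p.1 - p.2| ∂γ := by
        refine integral_mono (hφ₂.sub hφ₁) hcost.abs fun p => ?_
        have := hφ.dist_le_mul p.2 p.1
        simp only [Real.dist_eq, NNReal.coe_one, one_mul, abs_sub_comm p.2] at this
        exact (le_abs_self _).trans this

/-- Equality, not just `≤`, is what lets the main theorem integrate this identity over `μ`
without knowing that `x ↦ W1 (κ' x) (κ x)` is integrable. -/
lemma W1_map_affine {ρ : Measure ℝ} [IsProbabilityMeasure ρ] (hρ : Integrable (fun y => y) ρ)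
    {α : ℝ} (hα₀ : 0 ≤ α) (hα₁ : α ≤ 1) (x : ℝ) :
    W1 (ρ.map fun y => α * y + (1 - α) * x) ρ = (1 - α) * ∫ y, |y - x| ∂ρ := by
  set T : ℝ → ℝ := fun y => α * y + (1 - α) * x
  have hT : Measurable T := by fun_prop
  have hTx (y : ℝ) : |T y - x| = α * |y - x| := by
    rw [show T y - x = α * (y - x) by ring, abs_mul, abs_of_nonneg hα₀]
  have hTy (y : ℝ) : |T y - y| = (1 - α) * |y - x| := by
    rw [show T y - y = (1 - α) * (x - y) by ring, abs_mul, abs_of_nonneg (by linarith),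
      abs_sub_comm]
  refine le_antisymm ?_ ?_
  · calc W1 (ρ.map T) ρ ≤ ∫ y, |T y - y| ∂ρ := W1_map_le ρ hT
      _ = (1 - α) * ∫ y, |y - x| ∂ρ := by simp_rw [hTy]; exact integral_const_mul _ _
  · have := Measure.isProbabilityMeasure_map (μ := ρ) hT.aemeasurable
    have hTρ : Integrable (fun y => y) (ρ.map T) :=
      (integrable_map_measure aestronglyMeasurable_id hT.aemeasurable).mpr
        ((hρ.const_mul α).add (integrable_const _))
    have hlip : LipschitzWith 1 fun y : ℝ => |y - x| := by
      simpa only [Real.dist_eq] using LipschitzWith.dist_left x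
    calc (1 - α) * ∫ y, |y - x| ∂ρ = ∫ y, |y - x| ∂ρ - ∫ y, |T y - x| ∂ρ := by
          simp_rw [hTx]; rw [integral_const_mul]; ring
      _ = ∫ y, |y - x| ∂ρ - ∫ y, |y - x| ∂(ρ.map T) := by
          rw [integral_map hT.aemeasurable (by fun_prop)]
      _ ≤ W1 (ρ.map T) ρ := integral_sub_integral_le_W1 hTρ hρ hlip

lemma AW1_le_integral_W1 (μ : Measure ℝ) (κ κ' : Kernel ℝ ℝ) :
    AW1 μ κ μ κ' ≤ ∫ x, W1 (κ x) (κ' x) ∂μ := by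
  have hdiag : MeasurableEmbedding (Function.diag : ℝ → ℝ × ℝ) :=
    .of_measurable_inverse measurable_diag (Set.range_diag (α := ℝ) ▸ measurableSet_diagonal)
      measurable_fst fun _ => rfl
  refine csInf_le ⟨0, ?_⟩ ⟨_, Couplings.map_diag_mem μ, ?_⟩
  · rintro _ ⟨γ, -, rfl⟩
    exact integral_nonneg fun p => add_nonneg (abs_nonneg _) (W1_nonneg _ _)
  · simp [hdiag.integral_map]

lemma MeasureTheory.Measure.integral_comp_of_nonneg {α β : Type*}
    [MeasurableSpace α] [MeasurableSpace β]
    {μ : Measure α} {κ : Kernel α β} {f : β → ℝ} (hf₀ : 0 ≤ f)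
    (hfm : AEStronglyMeasurable f (κ ∘ₘ μ)) (hκf : ∀ x, Integrable f (κ x)) :
    ∫ y, f y ∂(κ ∘ₘ μ) = ∫ x, ∫ y, f y ∂κ x ∂μ := by
  by_cases hf : Integrable f (κ ∘ₘ μ)
  · rw [Measure.comp_eq_comp_const_apply] at hf ⊢
    exact Kernel.integral_comp hf
  · have hnorm : (fun x => ∫ y, ‖f y‖ ∂κ x) = fun x => ∫ y, f y ∂κ x := by
      simp only [Real.norm_eq_abs, abs_of_nonneg (hf₀ _)]
    rw [integral_undef hf, integral_undef fun h =>
      hf ((Measure.integrable_comp_iff hfm).mpr ⟨.of_forall hκf, by rwa [hnorm]⟩)]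

lemma integral_le_integral_add_of_abs_sub_le {α : Type*} [MeasurableSpace α] {μ : Measure α}
    {f g a : α → ℝ} (ha : Integrable a μ) (hf : AEStronglyMeasurable f μ)
    (hg : AEStronglyMeasurable g μ) (hfg : ∀ x, |f x - g x| ≤ a x) :
    ∫ x, f x ∂μ ≤ ∫ x, a x ∂μ + ∫ x, g x ∂μ := by
  have hdiff : Integrable (f - g) μ := ha.mono' (hf.sub hg) (.of_forall hfg)
  by_cases hgi : Integrable g μ
  · calc ∫ x, f x ∂μ = ∫ x, (f - g) x ∂μ + ∫ x, g x ∂μ := by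
          rw [← integral_add hdiff hgi]; simp
      _ ≤ ∫ x, a x ∂μ + ∫ x, g x ∂μ :=
          add_le_add_left (integral_mono hdiff ha fun x => (le_abs_self _).trans (hfg x)) _
  · have hfi : ¬ Integrable f μ := fun hfi => hgi (by simpa using hfi.sub hdiff)
    rw [integral_undef hfi, integral_undef hgi, add_zero]
    exact integral_nonneg fun x => (abs_nonneg _).trans (hfg x)

lemma integral_integral_abs_sub_le {μ : Measure ℝ} {κ : Kernel ℝ ℝ} [IsMarkovKernel κ]
    (hμ : Integrable (fun x => x) μ) (hκ : ∀ x, Integrable (fun y => y) (κ x)) :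
    ∫ x, ∫ y, |y - x| ∂κ x ∂μ ≤ ∫ x, |x| ∂μ + ∫ y, |y| ∂(κ ∘ₘ μ) := by
  rw [Measure.integral_comp_of_nonneg (fun _ => abs_nonneg _) (by fun_prop) fun x => (hκ x).abs]
  refine integral_le_integral_add_of_abs_sub_le hμ.abs
    (StronglyMeasurable.integral_kernel_prod_right'
      (f := fun p : ℝ × ℝ => |p.2 - p.1|) (by fun_prop)).aestronglyMeasurable
    (StronglyMeasurable.integral_kernel_prod_right'
      (f := fun p : ℝ × ℝ => |p.2|) (by fun_prop)).aestronglyMeasurable fun x => ?_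
  have hdist : Integrable (fun y => |y - x|) (κ x) := ((hκ x).sub (integrable_const x)).abs
  rw [← integral_sub hdist (hκ x).abs]
  simpa using norm_integral_le_of_norm_le_const (μ := κ x) (C := |x|)
    (f := fun y => |y - x| - |y|)
    (.of_forall fun y => by simpa using abs_abs_sub_abs_le_abs_sub (y - x) y)

theorem affine_contraction_general (μ : Measure ℝ)
    (hμ : Integrable (fun x : ℝ => x) μ)
    (κ κ' : Kernel ℝ ℝ) [IsMarkovKernel κ]
    (hκint : ∀ x, Integrable (fun y : ℝ => y) (κ x))
    (hsup : ∀ᵐ x ∂μ, ∫ y, y ∂(κ x) ≤ x)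
    (α : ℝ) (hα : α ∈ Set.Ioo (0 : ℝ) 1)
    (hκ' : ∀ x : ℝ, κ' x = (κ x).map (fun y => α * y + (1 - α) * x)) :
    (∀ᵐ x ∂μ, ∫ y, y ∂(κ' x) ≤ x) ∧
      AW1 μ κ' μ κ ≤
        (1 - α) * ((∫ x, |x| ∂μ) + ∫ y, |y| ∂(μ.bind (fun x => κ x))) := by
  obtain ⟨hα₀, hα₁⟩ := hα
  refine ⟨?_, ?_⟩
  · filter_upwards [hsup] with x hx
    rw [hκ', integral_id_map_affine (hκint x)]
    nlinarith
  · calc AW1 μ κ' μ κ ≤ ∫ x, W1 (κ' x) (κ x) ∂μ := AW1_le_integral_W1 μ κ' κ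
      _ = (1 - α) * ∫ x, ∫ y, |y - x| ∂κ x ∂μ := by
          simp_rw [hκ', W1_map_affine (hκint _) hα₀.le hα₁.le]
          exact integral_const_mul _ _
      _ ≤ (1 - α) * ((∫ x, |x| ∂μ) + ∫ y, |y| ∂(μ.bind (fun x => κ x))) :=
          mul_le_mul_of_nonneg_left (integral_integral_abs_sub_le hμ hκint) (by linarith)

theorem affine_contraction (μ : Measure ℝ) [IsProbabilityMeasure μ]
    (hμ : Integrable (fun x : ℝ => x) μ)
    (κ κ' : Kernel ℝ ℝ) [IsMarkovKernel κ] [IsMarkovKernel κ']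
    (hκint : ∀ x, Integrable (fun y : ℝ => y) (κ x))
    (hsup : ∀ᵐ x ∂μ, ∫ y, y ∂(κ x) ≤ x)
    (α : ℝ) (hα : α ∈ Set.Ioo (0 : ℝ) 1)
    (hκ' : ∀ x : ℝ, κ' x = (κ x).map (fun y => α * y + (1 - α) * x)) :
    (∀ᵐ x ∂μ, ∫ y, y ∂(κ' x) ≤ x) ∧
      AW1 μ κ' μ κ ≤
        (1 - α) * ((∫ x, |x| ∂μ) + ∫ y, |y| ∂(μ.bind (fun x => κ x))) :=
  affine_contraction_general μ hμ κ κ' hκint hsup α hα hκ'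
end
end
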